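/- arXiv:1507.01423 — 7 statements merged into one kernel-verified Lean document; each statement's English description precedes it below -/
import Mathlib

section
/- Let C be a complete lattice and let f, g : C → SL(C) be EM-monotone multivalued functions whose values are nonempty subcomplete sublattices of C. If f(c) ⪯_EM g(c) for every c ∈ C, then Fix(f) ⪯_EM Fix(g), where Fix(h) = {x ∈ C : x ∈ h(x)}. -/
/-- Smyth preorder on subsets. -/
def SmythLE {β : Type*} [LE β] (X Y : Set β) : Prop := ∀ y ∈ Y, ∃ x ∈ X, x ≤ y

/-- Hoare preorder on subsets. -/
def HoareLE {β : Type*} [LE β] (X Y : Set β) : Prop := ∀ x ∈ X, ∃ y ∈ Y, x ≤ y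

/-- Egli-Milner preorder on subsets. -/
def EgliMilnerLE {β : Type*} [LE β] (X Y : Set β) : Prop := SmythLE X Y ∧ HoareLE X Y

/-!
Since `f` is Smyth-monotone, `c ↦ ⋀ f c` is monotone, so by Knaster–Tarski it has a least
fixed point `x`. As `f x` contains its infimum `x`, this `x` is a fixed point of `f`; and for a
fixed point `y` of `g`, `f y ⪯_S g y` gives `⋀ f y ≤ y`, so `x ≤ y`. The Hoare half is the
order dual, using `c ↦ ⋁ g c` and its greatest fixed point.
-/

theorem monotone_sInf_of_smythLE {α β : Type*} [Preorder α] [CompleteLattice β]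
    {f : α → Set β} (hf : ∀ x y, x ≤ y → SmythLE (f x) (f y)) :
    Monotone fun c => sInf (f c) := fun a b hab =>
  le_sInf fun z hz =>
    let ⟨_, hw, hwz⟩ := hf a b hab z hz
    (sInf_le hw).trans hwz

theorem smythLE_setOf_mem_self {β : Type*} [CompleteLattice β] {f g : β → Set β}
    (hf : ∀ c, sInf (f c) ∈ f c) (hmono : ∀ x y, x ≤ y → SmythLE (f x) (f y))
    (hfg : ∀ c, SmythLE (f c) (g c)) :
    SmythLE {x | x ∈ f x} {x | x ∈ g x} := by
  intro y hy
  let F : β →o β := ⟨fun c => sInf (f c), monotone_sInf_of_smythLE hmono⟩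
  obtain ⟨a, ha, hay⟩ := hfg y y hy
  have hfix : sInf (f F.lfp) = F.lfp := F.map_lfp
  have hmem : F.lfp ∈ f F.lfp := by simpa only [hfix] using hf F.lfp
  exact ⟨F.lfp, hmem, F.lfp_le ((sInf_le ha).trans hay)⟩

theorem hoareLE_setOf_mem_self {β : Type*} [CompleteLattice β] {f g : β → Set β}
    (hg : ∀ c, sSup (g c) ∈ g c) (hmono : ∀ x y, x ≤ y → HoareLE (g x) (g y))
    (hfg : ∀ c, HoareLE (f c) (g c)) :
    HoareLE {x | x ∈ f x} {x | x ∈ g x} :=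
  -- over `βᵒᵈ`, `HoareLE X Y` unfolds to `SmythLE Y X` and `sSup` to `sInf`
  smythLE_setOf_mem_self (β := βᵒᵈ) (f := g) (g := f) hg (fun x y h => hmono y x h) hfg

/-- if `f, g : C → SL(C)` are EM-monotone multivalued functions on a
complete lattice whose values are nonempty subcomplete sublattices, and
`f(c) ⪯_EM g(c)` for every `c`, then `Fix(f) ⪯_EM Fix(g)`. -/
theorem fixed_points_EM_monotone {β : Type*} [CompleteLattice β] (f g : β → Set β)
    (hfSL : ∀ c, (f c).Nonempty ∧
      ∀ Z ⊆ f c, Z.Nonempty → sInf Z ∈ f c ∧ sSup Z ∈ f c)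
    (hgSL : ∀ c, (g c).Nonempty ∧
      ∀ Z ⊆ g c, Z.Nonempty → sInf Z ∈ g c ∧ sSup Z ∈ g c)
    (hfmono : ∀ x y : β, x ≤ y → EgliMilnerLE (f x) (f y))
    (hgmono : ∀ x y : β, x ≤ y → EgliMilnerLE (g x) (g y))
    (hfg : ∀ c, EgliMilnerLE (f c) (g c)) :
    EgliMilnerLE {x | x ∈ f x} {x | x ∈ g x} :=
  ⟨smythLE_setOf_mem_self (fun c => ((hfSL c).2 _ subset_rfl (hfSL c).1).1)
      (fun x y h => (hfmono x y h).1) (fun c => (hfg c).1),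
    hoareLE_setOf_mem_self (fun c => ((hgSL c).2 _ subset_rfl (hgSL c).1).2)
      (fun x y h => (hgmono x y h).2) (fun c => (hfg c).2)⟩
end

section
/- Let C and A be complete lattices, γ : A → C a monotone concretization map, f : C → ℘∧(C) an S-monotone multivalued function, and f♯ : A → ℘∧(A) an S-correct approximation of f (i.e., f♯ is S-monotone and f(γ(a)) ⪯_S γ^s(f♯(a)) for every a ∈ A). Then lfp(f) ≤_C γ(lfp(f♯)), where lfp denotes the least fixed point (which exists for both f and f♯). -/
theorem SmythLE.sInf_le_sInf {β : Type*} [CompleteSemilatticeInf β] {X Y : Set β}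
    (h : SmythLE X Y) : sInf X ≤ sInf Y :=
  le_sInf fun y hy => let ⟨_, hx, hxy⟩ := h y hy; (sInf_le hx).trans hxy

section SmythMonotone

variable {β : Type*} [CompleteLattice β] (f : β → Set β)
  (hf : ∀ x y : β, x ≤ y → SmythLE (f x) (f y))

def sInfOrderHom : β →o β where
  toFun x := sInf (f x)
  monotone' x y hxy := (hf x y hxy).sInf_le_sInf

variable {f}

theorem lfp_sInfOrderHom_le {c w : β} (hw : w ∈ f c) (hwc : w ≤ c) :
    OrderHom.lfp (sInfOrderHom f hf) ≤ c :=
  OrderHom.lfp_le _ ((sInf_le hw).trans hwc)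

theorem isLeast_lfp_sInfOrderHom (hinf : ∀ x, sInf (f x) ∈ f x) :
    IsLeast {x | x ∈ f x} (OrderHom.lfp (sInfOrderHom f hf)) := by
  set L := OrderHom.lfp (sInfOrderHom f hf)
  have hfix : sInf (f L) = L := (sInfOrderHom f hf).map_lfp
  refine ⟨?_, fun x hx => lfp_sInfOrderHom_le hf hx le_rfl⟩
  have hmem := hinf L
  rwa [hfix] at hmem

theorem IsLeast.le_of_mem_le (hf : ∀ x y : β, x ≤ y → SmythLE (f x) (f y))
    (hinf : ∀ x, sInf (f x) ∈ f x) {L c w : β}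
    (hL : IsLeast {x | x ∈ f x} L) (hw : w ∈ f c) (hwc : w ≤ c) : L ≤ c :=
  hL.unique (isLeast_lfp_sInfOrderHom hf hinf) ▸ lfp_sInfOrderHom_le hf hw hwc

end SmythMonotone

theorem correct_lfp_approximation_general {C A : Type*} [CompleteLattice C] [CompleteLattice A]
    (γ : A → C)
    (f : C → Set C) (hf₁ : ∀ c, sInf (f c) ∈ f c)
    (hf₂ : ∀ x y : C, x ≤ y → SmythLE (f x) (f y))
    (f' : A → Set A) (hf'₁ : ∀ a, sInf (f' a) ∈ f' a)
    (hf'₂ : ∀ x y : A, x ≤ y → SmythLE (f' x) (f' y))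
    (hcorrect : ∀ a : A, SmythLE (f (γ a)) (γ '' f' a)) :
    (∃ L, IsLeast {x | x ∈ f x} L) ∧ (∃ L', IsLeast {a | a ∈ f' a} L') ∧
    ∀ L L', IsLeast {x | x ∈ f x} L → IsLeast {a | a ∈ f' a} L' → L ≤ γ L' := by
  refine ⟨⟨_, isLeast_lfp_sInfOrderHom hf₂ hf₁⟩, ⟨_, isLeast_lfp_sInfOrderHom hf'₂ hf'₁⟩, ?_⟩
  intro L L' hL hL'
  obtain ⟨w, hw, hwL'⟩ := hcorrect L' (γ L') ⟨L', hL'.1, rfl⟩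
  exact hL.le_of_mem_le hf₂ hf₁ hw hwL'

/-- correct least fixed point approximation: if `f♯ : A → ℘∧(A)` is an
S-correct approximation (over a monotone concretization `γ : A → C`) of an
S-monotone `f : C → ℘∧(C)`, then both least fixed points exist and
`lfp(f) ≤ γ(lfp(f♯))`. -/
theorem correct_lfp_approximation {C A : Type*} [CompleteLattice C] [CompleteLattice A]
    (γ : A → C) (hγ : Monotone γ)
    (f : C → Set C) (hf₁ : ∀ c, sInf (f c) ∈ f c)
    (hf₂ : ∀ x y : C, x ≤ y → SmythLE (f x) (f y))
    (f' : A → Set A) (hf'₁ : ∀ a, sInf (f' a) ∈ f' a)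
    (hf'₂ : ∀ x y : A, x ≤ y → SmythLE (f' x) (f' y))
    (hcorrect : ∀ a : A, SmythLE (f (γ a)) (γ '' f' a)) :
    (∃ L, IsLeast {x | x ∈ f x} L) ∧ (∃ L', IsLeast {a | a ∈ f' a} L') ∧
    ∀ L L', IsLeast {x | x ∈ f x} L → IsLeast {a | a ∈ f' a} L' → L ≤ γ L' :=
  correct_lfp_approximation_general γ f hf₁ hf₂ f' hf'₁ hf'₂ hcorrect
end

section
/- Let (α, C, A, γ) be a Galois connection between complete lattices. Then (α^s, ⟨℘∧(C), ⪯_S⟩, ⟨℘∧(A), ⪯_S⟩, γ^s) is a preorder-Galois connection: α^s and γ^s are monotone with respect to the Smyth preorders (X ⪯_S X' implies α^s(X) ⪯_S α^s(X'), and Y ⪯_S Y' implies γ^s(Y) ⪯_S γ^s(Y')), and for all X ∈ ℘∧(C) and Y ∈ ℘∧(A), α^s(X) ⪯_S Y ⟺ X ⪯_S γ^s(Y). -/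
theorem Monotone.smythLE_image {β δ : Type*} [Preorder β] [Preorder δ] {f : β → δ}
    (hf : Monotone f) {X X' : Set β} (h : SmythLE X X') : SmythLE (f '' X) (f '' X') := by
  rintro _ ⟨x', hx', rfl⟩
  obtain ⟨x, hx, hle⟩ := h x' hx'
  exact ⟨f x, Set.mem_image_of_mem f hx, hf hle⟩

theorem GaloisConnection.smythLE_image_l_iff {β δ : Type*} [Preorder β] [Preorder δ]
    {l : β → δ} {u : δ → β} (gc : GaloisConnection l u) (X : Set β) (Y : Set δ) :
    SmythLE (l '' X) Y ↔ SmythLE X (u '' Y) := by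
  constructor
  · rintro h _ ⟨y, hy, rfl⟩
    obtain ⟨_, ⟨x, hx, rfl⟩, hle⟩ := h y hy
    exact ⟨x, hx, gc.le_u hle⟩
  · intro h y hy
    obtain ⟨x, hx, hle⟩ := h (u y) (Set.mem_image_of_mem u hy)
    exact ⟨l x, Set.mem_image_of_mem l hx, gc.l_le hle⟩

/-- a Galois connection `(α, C, A, γ)` between complete lattices lifts
pointwise to a preorder-Galois connection
`(α^s, ⟨℘∧(C), ⪯_S⟩, ⟨℘∧(A), ⪯_S⟩, γ^s)` for the Smyth preorders. -/
theorem smyth_preorder_galois_connection {C A : Type*}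
    [CompleteLattice C] [CompleteLattice A]
    (α : C → A) (γ : A → C) (hgc : GaloisConnection α γ) :
    (∀ X X' : Set C, sInf X ∈ X → sInf X' ∈ X' →
      SmythLE X X' → SmythLE (α '' X) (α '' X')) ∧
    (∀ Y Y' : Set A, sInf Y ∈ Y → sInf Y' ∈ Y' →
      SmythLE Y Y' → SmythLE (γ '' Y) (γ '' Y')) ∧
    (∀ (X : Set C) (Y : Set A), sInf X ∈ X → sInf Y ∈ Y →
      (SmythLE (α '' X) Y ↔ SmythLE X (γ '' Y))) :=
  ⟨fun _ _ _ _ => hgc.monotone_l.smythLE_image,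
    fun _ _ _ _ => hgc.monotone_u.smythLE_image,
    fun X Y _ _ => hgc.smythLE_image_l_iff X Y⟩
end

section
/- Let (α, C, A, γ) be a Galois connection between complete lattices. Then (α^s, ⟨℘∨(C), ⪯_H⟩, ⟨℘∨(A), ⪯_H⟩, γ^s) and (α^s, ⟨℘◇(C), ⪯_EM⟩, ⟨℘◇(A), ⪯_EM⟩, γ^s) are preorder-Galois connections: α^s and γ^s are monotone with respect to the Hoare (respectively Egli-Milner) preorders, and for all X ∈ ℘∨(C), Y ∈ ℘∨(A) (respectively X ∈ ℘◇(C), Y ∈ ℘◇(A)), α^s(X) ⪯_H Y ⟺ X ⪯_H γ^s(Y) (respectively α^s(X) ⪯_EM Y ⟺ X ⪯_EM γ^s(Y)). -/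
section Preorder

variable {β δ : Type*} [Preorder β] [Preorder δ]

theorem HoareLE.image {f : β → δ} (hf : Monotone f) {X X' : Set β} (h : HoareLE X X') :
    HoareLE (f '' X) (f '' X') := by
  rintro _ ⟨x, hx, rfl⟩
  obtain ⟨x', hx', hxx'⟩ := h x hx
  exact ⟨f x', Set.mem_image_of_mem f hx', hf hxx'⟩

theorem SmythLE.image {f : β → δ} (hf : Monotone f) {X X' : Set β} (h : SmythLE X X') :
    SmythLE (f '' X) (f '' X') := by
  rintro _ ⟨x', hx', rfl⟩
  obtain ⟨x, hx, hxx'⟩ := h x' hx'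
  exact ⟨f x, Set.mem_image_of_mem f hx, hf hxx'⟩

theorem EgliMilnerLE.image {f : β → δ} (hf : Monotone f) {X X' : Set β}
    (h : EgliMilnerLE X X') : EgliMilnerLE (f '' X) (f '' X') :=
  ⟨h.1.image hf, h.2.image hf⟩

namespace GaloisConnection

variable {l : β → δ} {u : δ → β}

theorem hoareLE_image_iff (gc : GaloisConnection l u) {X : Set β} {Y : Set δ} :
    HoareLE (l '' X) Y ↔ HoareLE X (u '' Y) := by
  constructor
  · intro h x hx
    obtain ⟨y, hy, hxy⟩ := h (l x) (Set.mem_image_of_mem l hx)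
    exact ⟨u y, Set.mem_image_of_mem u hy, gc.le_u hxy⟩
  · rintro h _ ⟨x, hx, rfl⟩
    obtain ⟨_, ⟨y, hy, rfl⟩, hxy⟩ := h x hx
    exact ⟨y, hy, gc.l_le hxy⟩

theorem smythLE_image_iff (gc : GaloisConnection l u) {X : Set β} {Y : Set δ} :
    SmythLE (l '' X) Y ↔ SmythLE X (u '' Y) := by
  constructor
  · rintro h _ ⟨y, hy, rfl⟩
    obtain ⟨_, ⟨x, hx, rfl⟩, hxy⟩ := h y hy
    exact ⟨x, hx, gc.le_u hxy⟩
  · intro h y hy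
    obtain ⟨x, hx, hxy⟩ := h (u y) (Set.mem_image_of_mem u hy)
    exact ⟨l x, Set.mem_image_of_mem l hx, gc.l_le hxy⟩

theorem egliMilnerLE_image_iff (gc : GaloisConnection l u) {X : Set β} {Y : Set δ} :
    EgliMilnerLE (l '' X) Y ↔ EgliMilnerLE X (u '' Y) :=
  and_congr gc.smythLE_image_iff gc.hoareLE_image_iff

end GaloisConnection

end Preorder

/-- a Galois connection `(α, C, A, γ)` between complete lattices lifts
pointwise to preorder-Galois connections
`(α^s, ⟨℘∨(C), ⪯_H⟩, ⟨℘∨(A), ⪯_H⟩, γ^s)` and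
`(α^s, ⟨℘◇(C), ⪯_EM⟩, ⟨℘◇(A), ⪯_EM⟩, γ^s)` for the Hoare and Egli-Milner preorders. -/
theorem hoare_and_egliMilner_preorder_galois_connections {C A : Type*}
    [CompleteLattice C] [CompleteLattice A]
    (α : C → A) (γ : A → C) (hgc : GaloisConnection α γ) :
    -- Hoare lifting
    ((∀ X X' : Set C, sSup X ∈ X → sSup X' ∈ X' →
        HoareLE X X' → HoareLE (α '' X) (α '' X')) ∧
      (∀ Y Y' : Set A, sSup Y ∈ Y → sSup Y' ∈ Y' →
        HoareLE Y Y' → HoareLE (γ '' Y) (γ '' Y')) ∧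
      (∀ (X : Set C) (Y : Set A), sSup X ∈ X → sSup Y ∈ Y →
        (HoareLE (α '' X) Y ↔ HoareLE X (γ '' Y)))) ∧
    -- Egli-Milner lifting
    ((∀ X X' : Set C, sInf X ∈ X ∧ sSup X ∈ X → sInf X' ∈ X' ∧ sSup X' ∈ X' →
        EgliMilnerLE X X' → EgliMilnerLE (α '' X) (α '' X')) ∧
      (∀ Y Y' : Set A, sInf Y ∈ Y ∧ sSup Y ∈ Y → sInf Y' ∈ Y' ∧ sSup Y' ∈ Y' →
        EgliMilnerLE Y Y' → EgliMilnerLE (γ '' Y) (γ '' Y')) ∧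
      (∀ (X : Set C) (Y : Set A), sInf X ∈ X ∧ sSup X ∈ X → sInf Y ∈ Y ∧ sSup Y ∈ Y →
        (EgliMilnerLE (α '' X) Y ↔ EgliMilnerLE X (γ '' Y)))) :=
  ⟨⟨fun _ _ _ _ h ↦ h.image hgc.monotone_l,
    fun _ _ _ _ h ↦ h.image hgc.monotone_u,
    fun _ _ _ _ ↦ hgc.hoareLE_image_iff⟩,
   ⟨fun _ _ _ _ h ↦ h.image hgc.monotone_l,
    fun _ _ _ _ h ↦ h.image hgc.monotone_u,
    fun _ _ _ _ ↦ hgc.egliMilnerLE_image_iff⟩⟩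
end

section
/- Let (α, C, A, γ) be a Galois connection between complete lattices, let f : C → ℘∧(C) be S-monotone, and define the best correct approximation f^A : A → ℘(A) by f^A(a) = α^s(f(γ(a))). Then f^A maps into ℘∧(A) and is S-monotone, and an S-monotone multivalued function f♯ : A → ℘∧(A) is an S-correct approximation of f if and only if f^A(a) ⪯_S f♯(a) for every a ∈ A. The analogous characterizations hold for H-correct approximations (with ℘∨ and ⪯_H) and for EM-correct approximations (with ℘◇ and ⪯_EM). -/
section ImageOfExtremalMember

variable {β δ : Type*} [CompleteLattice β] [CompleteLattice δ] {g : β → δ} {X : Set β}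

theorem Monotone.sInf_image_mem (hg : Monotone g) (hX : sInf X ∈ X) :
    sInf (g '' X) ∈ g '' X := by
  have hleast : IsLeast (g '' X) (g (sInf X)) := hg.map_isLeast ⟨hX, fun _ => sInf_le⟩
  rw [hleast.isGLB.sInf_eq]
  exact hleast.1

theorem Monotone.sSup_image_mem (hg : Monotone g) (hX : sSup X ∈ X) :
    sSup (g '' X) ∈ g '' X := by
  have hgreatest : IsGreatest (g '' X) (g (sSup X)) := hg.map_isGreatest ⟨hX, fun _ => le_sSup⟩
  rw [hgreatest.isLUB.sSup_eq]
  exact hgreatest.1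

end ImageOfExtremalMember

section ImageOfPreorder

variable {β δ : Type*} [Preorder β] [Preorder δ] {g : β → δ} {X Y : Set β}

theorem SmythLE.image_s12 (hg : Monotone g) (h : SmythLE X Y) : SmythLE (g '' X) (g '' Y) := by
  rintro _ ⟨y, hy, rfl⟩
  obtain ⟨x, hx, hxy⟩ := h y hy
  exact ⟨g x, Set.mem_image_of_mem g hx, hg hxy⟩

theorem HoareLE.image_s12 (hg : Monotone g) (h : HoareLE X Y) : HoareLE (g '' X) (g '' Y) := by
  rintro _ ⟨x, hx, rfl⟩
  obtain ⟨y, hy, hxy⟩ := h x hx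
  exact ⟨g y, Set.mem_image_of_mem g hy, hg hxy⟩

theorem EgliMilnerLE.image_s12 (hg : Monotone g) (h : EgliMilnerLE X Y) :
    EgliMilnerLE (g '' X) (g '' Y) :=
  ⟨h.1.image_s12 hg, h.2.image_s12 hg⟩

end ImageOfPreorder

namespace GaloisConnection

variable {C A : Type*} [Preorder C] [Preorder A] {α : C → A} {γ : A → C}

theorem smythLE_image_u_iff (hgc : GaloisConnection α γ) {X : Set C} {Y : Set A} :
    SmythLE X (γ '' Y) ↔ SmythLE (α '' X) Y := by
  constructor
  · intro h y hy
    obtain ⟨x, hx, hxy⟩ := h (γ y) (Set.mem_image_of_mem γ hy)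
    exact ⟨α x, Set.mem_image_of_mem α hx, hgc.l_le hxy⟩
  · rintro h _ ⟨y, hy, rfl⟩
    obtain ⟨_, ⟨x, hx, rfl⟩, hxy⟩ := h y hy
    exact ⟨x, hx, hgc.le_u hxy⟩

theorem hoareLE_image_u_iff (hgc : GaloisConnection α γ) {X : Set C} {Y : Set A} :
    HoareLE X (γ '' Y) ↔ HoareLE (α '' X) Y := by
  constructor
  · rintro h _ ⟨x, hx, rfl⟩
    obtain ⟨_, ⟨y, hy, rfl⟩, hxy⟩ := h x hx
    exact ⟨y, hy, hgc.l_le hxy⟩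
  · intro h x hx
    obtain ⟨y, hy, hxy⟩ := h (α x) (Set.mem_image_of_mem α hx)
    exact ⟨γ y, Set.mem_image_of_mem γ hy, hgc.le_u hxy⟩

theorem egliMilnerLE_image_u_iff (hgc : GaloisConnection α γ) {X : Set C} {Y : Set A} :
    EgliMilnerLE X (γ '' Y) ↔ EgliMilnerLE (α '' X) Y :=
  and_congr hgc.smythLE_image_u_iff hgc.hoareLE_image_u_iff

end GaloisConnection

/-- best correct approximation: given a Galois connection
`(α, C, A, γ)` between complete lattices, for any S-monotone `f : C → ℘∧(C)` the
best correct approximation `f^A a = α^s (f (γ a))` maps into `℘∧(A)`, is S-monotone,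
and an S-monotone `f♯ : A → ℘∧(A)` is an S-correct approximation of `f` iff
`f^A a ⪯_S f♯ a` for every `a`; analogously for the Hoare and Egli-Milner cases. -/
theorem best_correct_approximation {C A : Type*}
    [CompleteLattice C] [CompleteLattice A]
    (α : C → A) (γ : A → C) (hgc : GaloisConnection α γ) :
    -- Smyth case
    (∀ f : C → Set C, (∀ c, sInf (f c) ∈ f c) →
      (∀ x y : C, x ≤ y → SmythLE (f x) (f y)) →
      ((∀ a : A, sInf (α '' f (γ a)) ∈ α '' f (γ a)) ∧
       (∀ a b : A, a ≤ b → SmythLE (α '' f (γ a)) (α '' f (γ b))) ∧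
       (∀ f' : A → Set A, (∀ a, sInf (f' a) ∈ f' a) →
         (∀ a b : A, a ≤ b → SmythLE (f' a) (f' b)) →
         ((∀ a : A, SmythLE (f (γ a)) (γ '' f' a)) ↔
           ∀ a : A, SmythLE (α '' f (γ a)) (f' a))))) ∧
    -- Hoare case
    (∀ f : C → Set C, (∀ c, sSup (f c) ∈ f c) →
      (∀ x y : C, x ≤ y → HoareLE (f x) (f y)) →
      ((∀ a : A, sSup (α '' f (γ a)) ∈ α '' f (γ a)) ∧
       (∀ a b : A, a ≤ b → HoareLE (α '' f (γ a)) (α '' f (γ b))) ∧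
       (∀ f' : A → Set A, (∀ a, sSup (f' a) ∈ f' a) →
         (∀ a b : A, a ≤ b → HoareLE (f' a) (f' b)) →
         ((∀ a : A, HoareLE (f (γ a)) (γ '' f' a)) ↔
           ∀ a : A, HoareLE (α '' f (γ a)) (f' a))))) ∧
    -- Egli-Milner case
    (∀ f : C → Set C, (∀ c, sInf (f c) ∈ f c ∧ sSup (f c) ∈ f c) →
      (∀ x y : C, x ≤ y → EgliMilnerLE (f x) (f y)) →
      ((∀ a : A, sInf (α '' f (γ a)) ∈ α '' f (γ a) ∧ sSup (α '' f (γ a)) ∈ α '' f (γ a)) ∧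
       (∀ a b : A, a ≤ b → EgliMilnerLE (α '' f (γ a)) (α '' f (γ b))) ∧
       (∀ f' : A → Set A, (∀ a, sInf (f' a) ∈ f' a ∧ sSup (f' a) ∈ f' a) →
         (∀ a b : A, a ≤ b → EgliMilnerLE (f' a) (f' b)) →
         ((∀ a : A, EgliMilnerLE (f (γ a)) (γ '' f' a)) ↔
           ∀ a : A, EgliMilnerLE (α '' f (γ a)) (f' a))))) := by
  have hα := hgc.monotone_l
  have hγ := hgc.monotone_u
  refine ⟨fun f hf hm => ⟨?_, ?_, ?_⟩, fun f hf hm => ⟨?_, ?_, ?_⟩, fun f hf hm => ⟨?_, ?_, ?_⟩⟩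
  · exact fun a => hα.sInf_image_mem (hf (γ a))
  · exact fun a b hab => (hm _ _ (hγ hab)).image_s12 hα
  · exact fun _ _ _ => forall_congr' fun _ => hgc.smythLE_image_u_iff
  · exact fun a => hα.sSup_image_mem (hf (γ a))
  · exact fun a b hab => (hm _ _ (hγ hab)).image_s12 hα
  · exact fun _ _ _ => forall_congr' fun _ => hgc.hoareLE_image_u_iff
  · exact fun a => ⟨hα.sInf_image_mem (hf (γ a)).1, hα.sSup_image_mem (hf (γ a)).2⟩
  · exact fun a b hab => (hm _ _ (hγ hab)).image_s12 hα
  · exact fun _ _ _ => forall_congr' fun _ => hgc.egliMilnerLE_image_u_iff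
end

section
/- Let (α, C, A, γ) be a Galois connection between complete lattices, let f : C → ℘∧(C) and f♯ : A → ℘∧(A) be S-monotone multivalued functions, and suppose that for every c ∈ C, α^s(f(c)) ⪯_S f♯(α(c)). Then α(lfp(f)) ≤_A lfp(f♯), where lfp denotes the least fixed point of a multivalued function. -/
theorem GaloisConnection.l_lfp_le {C A : Type*} [CompleteLattice C] [CompleteLattice A]
    {l : C → A} {u : A → C} (gc : GaloisConnection l u) {g : C →o C} {g' : A →o A}
    (h : ∀ a, l (g (u a)) ≤ g' a) : l g.lfp ≤ g'.lfp :=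
  gc.l_le <| g.lfp_le <| gc.le_u <| (h _).trans_eq g'.map_lfp

section SmythInf

variable {C : Type*} [CompleteLattice C]

def smythInfHom (f : C → Set C) (hf : ∀ x y : C, x ≤ y → SmythLE (f x) (f y)) : C →o C where
  toFun c := sInf (f c)
  monotone' x y hxy := (hf x y hxy).sInf_le_sInf

theorem isLeast_lfp_smythInfHom (f : C → Set C) (hf₁ : ∀ c, sInf (f c) ∈ f c)
    (hf₂ : ∀ x y : C, x ≤ y → SmythLE (f x) (f y)) :
    IsLeast {x | x ∈ f x} (smythInfHom f hf₂).lfp := by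
  refine ⟨?_, fun x hx => (smythInfHom f hf₂).lfp_le (sInf_le hx)⟩
  have hfix : sInf (f (smythInfHom f hf₂).lfp) = (smythInfHom f hf₂).lfp :=
    (smythInfHom f hf₂).map_lfp
  have hmem := hf₁ (smythInfHom f hf₂).lfp
  rwa [hfix] at hmem

theorem GaloisConnection.l_lfp_smythInfHom_le {A : Type*} [CompleteLattice A]
    {α : C → A} {γ : A → C} (gc : GaloisConnection α γ)
    {f : C → Set C} (hf : ∀ x y : C, x ≤ y → SmythLE (f x) (f y))
    {f' : A → Set A} (hf' : ∀ x y : A, x ≤ y → SmythLE (f' x) (f' y))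
    (hcorrect : ∀ c : C, SmythLE (α '' f c) (f' (α c))) :
    α (smythInfHom f hf).lfp ≤ (smythInfHom f' hf').lfp := by
  refine gc.l_lfp_le fun a => ?_
  calc α (sInf (f (γ a)))
      ≤ sInf (α '' f (γ a)) := gc.monotone_l.map_sInf_le.trans_eq sInf_image.symm
    _ ≤ sInf (f' (α (γ a))) := (hcorrect (γ a)).sInf_le_sInf
    _ ≤ sInf (f' a) := (hf' _ _ (gc.l_u_le a)).sInf_le_sInf

end SmythInf

/-- abstraction-based correct least fixed point approximation: if
`(α, C, A, γ)` is a Galois connection between complete lattices, `f : C → ℘∧(C)` and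
`f♯ : A → ℘∧(A)` are S-monotone, and `α^s(f c) ⪯_S f♯ (α c)` for every `c`, then
`α (lfp f) ≤ lfp f♯`. -/
theorem abstraction_correct_lfp_approximation {C A : Type*}
    [CompleteLattice C] [CompleteLattice A]
    (α : C → A) (γ : A → C) (hgc : GaloisConnection α γ)
    (f : C → Set C) (hf₁ : ∀ c, sInf (f c) ∈ f c)
    (hf₂ : ∀ x y : C, x ≤ y → SmythLE (f x) (f y))
    (f' : A → Set A) (hf'₁ : ∀ a, sInf (f' a) ∈ f' a)
    (hf'₂ : ∀ x y : A, x ≤ y → SmythLE (f' x) (f' y))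
    (hcorrect : ∀ c : C, SmythLE (α '' f c) (f' (α c))) :
    (∃ L, IsLeast {x | x ∈ f x} L) ∧ (∃ L', IsLeast {a | a ∈ f' a} L') ∧
    ∀ L L', IsLeast {x | x ∈ f x} L → IsLeast {a | a ∈ f' a} L' → α L ≤ L' := by
  have hL := isLeast_lfp_smythInfHom f hf₁ hf₂
  have hL' := isLeast_lfp_smythInfHom f' hf'₁ hf'₂
  refine ⟨⟨_, hL⟩, ⟨_, hL'⟩, fun L L' hL₀ hL₀' => ?_⟩
  rw [hL₀.unique hL, hL₀'.unique hL']
  exact hgc.l_lfp_smythInfHom_le hf₂ hf'₂ hcorrect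
end

section
/- Let (α_i, S_i, A_i, γ_i), i = 1,…,n, be finitely disjunctive Galois insertions between complete lattices, let S = ∏_{i=1}^n S_i, A = ∏_{i=1}^n A_i, and let (α, S, A, γ) be their componentwise product (α(c) = (α_i(c_i))_i, γ(a) = (γ_i(a_i))_i). Let Γ = ⟨S_i, u_i⟩_{i=1}^n be a supermodular game with best response correspondence B, and assume B(s) is a nonempty subcomplete sublattice of S for every s ∈ S. Let Γ^G = ⟨A_i, u_i^G⟩_{i=1}^n be the abstract game with u_i^G(a) = u_i(γ(a)) and best response correspondence B^G, and assume B^G(a) is a nonempty subcomplete sublattice of A for every a ∈ A. Suppose that for every a ∈ A, (⋁_S B(γ(a))) ∨_S γ(⋀_A B^G(a)) ∈ γ(A). Then Eq(Γ) ⪯_EM γ^s(Eq(Γ^G)); in particular the least equilibrium of Γ is ≤ the image under γ of the least equilibrium of Γ^G, and likewise for the greatest equilibria. -/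
/-- The best response correspondence of the game with strategy spaces `S j` and
utility functions `u i : (∀ j, S j) → ℝ^{N i}`:
`B(s) = ∏ᵢ Bᵢ(s₋ᵢ)` where `Bᵢ(s₋ᵢ) = {xᵢ | ∀ yᵢ, uᵢ(yᵢ, s₋ᵢ) ≤ uᵢ(xᵢ, s₋ᵢ)}`. -/
def bestResponse {n : ℕ} {S : Fin n → Type*} [∀ j, CompleteLattice (S j)]
    {N : Fin n → ℕ} (u : ∀ i, (∀ j, S j) → (Fin (N i) → ℝ))
    (s : ∀ j, S j) : Set (∀ j, S j) :=
  {t | ∀ i, ∀ x : S i, u i (Function.update s i x) ≤ u i (Function.update s i (t i))}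

/-- The pure strategy Nash equilibria: the fixed points of the best response. -/
def nashEq {n : ℕ} {S : Fin n → Type*} [∀ j, CompleteLattice (S j)]
    {N : Fin n → ℕ} (u : ∀ i, (∀ j, S j) → (Fin (N i) → ℝ)) : Set (∀ j, S j) :=
  {s | s ∈ bestResponse u s}

/-!
Supermodularity makes `s ↦ ⋀ B(s)` and `s ↦ ⋁ B(s)` monotone (Topkis), so by Tarski's theorem
every `t` with `⋀ B(t) ≤ t` lies above an equilibrium and every `t` with `t ≤ ⋁ B(t)` lies below
one. Fix `a`, let `w = ⋁ B(γ a)`, `e = ⋀ B^G(a)` and pick `b` with `γ b = w ⊔ γ e`. Since `w` is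
optimal among all strategies and `γ e` among those of the form `γ x`, we have
`u(w ⊔ γ e) ≤ u(γ e)` and `u(w ⊓ γ e) ≤ u(w)`, and supermodularity
`u(w) + u(γ e) ≤ u(w ⊔ γ e) + u(w ⊓ γ e)` turns both into equalities: `w ⊓ γ e ∈ B(γ a)` and
`b ∈ B^G(a)`. For an abstract equilibrium `a` this gives `⋀ B(γ a) ≤ γ e ≤ γ a`, whence a concrete
equilibrium below `γ a`; for a concrete equilibrium `s` and `a = α s` it gives `s ≤ w ≤ γ b`, so
`α s ≤ b ≤ ⋁ B^G(α s)`, whence an abstract equilibrium above `α s`.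
-/

open Function Set

section Powerdomain

variable {β : Type*} [Preorder β] {X Y : Set β} {x y : β}

theorem SmythLE.le_of_mem_lowerBounds (h : SmythLE X Y) (hx : x ∈ lowerBounds X) (hy : y ∈ Y) :
    x ≤ y :=
  let ⟨_, hz, hzy⟩ := h y hy
  (hx hz).trans hzy

theorem HoareLE.le_of_mem_upperBounds (h : HoareLE X Y) (hx : x ∈ X) (hy : y ∈ upperBounds Y) :
    x ≤ y :=
  let ⟨_, hz, hxz⟩ := h x hx
  hxz.trans (hy hz)

end Powerdomain

section Utility

variable {n : ℕ} {S : Fin n → Type*} [∀ j, Lattice (S j)]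
  {N : Fin n → ℕ} {u : ∀ i, (∀ j, S j) → (Fin (N i) → ℝ)}

def IsSupermodularUtility (u : ∀ i, (∀ j, S j) → (Fin (N i) → ℝ)) : Prop :=
  ∀ i, ∀ s : ∀ j, S j, ∀ x y : S i,
    u i (update s i x) + u i (update s i y) ≤
      u i (update s i (x ⊔ y)) + u i (update s i (x ⊓ y))

def HasIncreasingDifferences (u : ∀ i, (∀ j, S j) → (Fin (N i) → ℝ)) : Prop :=
  ∀ i, ∀ x x' : S i, x ≤ x' → ∀ s t : ∀ j, S j, s ≤ t →
    u i (update s i x') - u i (update s i x) ≤ u i (update t i x') - u i (update t i x)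

namespace IsSupermodularUtility

variable (hsm : IsSupermodularUtility u) {i : Fin n} {s : ∀ j, S j} {x y : S i}
include hsm

theorem le_inf_of_sup_le (h : u i (update s i (x ⊔ y)) ≤ u i (update s i y)) :
    u i (update s i x) ≤ u i (update s i (x ⊓ y)) :=
  le_of_add_le_add_right <| (hsm i s x y).trans <| (add_le_add_left h _).trans_eq (add_comm _ _)

theorem le_sup_of_inf_le (h : u i (update s i (x ⊓ y)) ≤ u i (update s i x)) :
    u i (update s i y) ≤ u i (update s i (x ⊔ y)) :=
  le_of_add_le_add_left <| (hsm i s x y).trans <| (add_le_add_right h _).trans_eq (add_comm _ _)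

end IsSupermodularUtility

namespace HasIncreasingDifferences

variable (hid : HasIncreasingDifferences u) {i : Fin n} {s t : ∀ j, S j} {x x' : S i}
include hid

theorem utility_le_of_le (hx : x' ≤ x) (hst : s ≤ t)
    (h : u i (update s i x') ≤ u i (update s i x)) :
    u i (update t i x') ≤ u i (update t i x) :=
  sub_nonneg.1 <| (sub_nonneg.2 h).trans (hid i x' x hx s t hst)

theorem utility_le_of_ge (hx : x' ≤ x) (hst : s ≤ t)
    (h : u i (update t i x) ≤ u i (update t i x')) :
    u i (update s i x) ≤ u i (update s i x') :=
  sub_nonpos.1 <| (hid i x' x hx s t hst).trans (sub_nonpos.2 h)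

end HasIncreasingDifferences

end Utility

section BestResponse

variable {n : ℕ} {S : Fin n → Type*} [∀ j, CompleteLattice (S j)]
  {N : Fin n → ℕ} {u : ∀ i, (∀ j, S j) → (Fin (N i) → ℝ)}

theorem mem_bestResponse_of_utility_le {s p q : ∀ j, S j} (hp : p ∈ bestResponse u s)
    (h : ∀ i, u i (update s i (p i)) ≤ u i (update s i (q i))) : q ∈ bestResponse u s :=
  fun i x => (hp i x).trans (h i)

variable (hsm : IsSupermodularUtility u) (hid : HasIncreasingDifferences u)
include hsm hid

theorem monotone_sInf_bestResponse (hinf : ∀ s, sInf (bestResponse u s) ∈ bestResponse u s) :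
    Monotone fun s => sInf (bestResponse u s) := by
  intro s t hst
  have hmem : sInf (bestResponse u s) ⊓ sInf (bestResponse u t) ∈ bestResponse u s :=
    mem_bestResponse_of_utility_le (hinf s) fun i =>
      hid.utility_le_of_ge inf_le_left hst (hsm.le_inf_of_sup_le (hinf t i _))
  exact (sInf_le hmem).trans inf_le_right

theorem monotone_sSup_bestResponse (hsup : ∀ s, sSup (bestResponse u s) ∈ bestResponse u s) :
    Monotone fun s => sSup (bestResponse u s) := by
  intro s t hst
  have hmem : sSup (bestResponse u s) ⊔ sSup (bestResponse u t) ∈ bestResponse u t :=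
    mem_bestResponse_of_utility_le (hsup t) fun i =>
      hsm.le_sup_of_inf_le (hid.utility_le_of_le inf_le_left hst (hsup s i _))
  exact le_sup_left.trans (le_sSup hmem)

theorem exists_mem_nashEq_le (hinf : ∀ s, sInf (bestResponse u s) ∈ bestResponse u s)
    {t : ∀ j, S j} (ht : sInf (bestResponse u t) ≤ t) : ∃ e ∈ nashEq u, e ≤ t := by
  let g : (∀ j, S j) →o (∀ j, S j) := ⟨_, monotone_sInf_bestResponse hsm hid hinf⟩
  have hmem := hinf (OrderHom.lfp g)
  rw [show sInf (bestResponse u (OrderHom.lfp g)) = OrderHom.lfp g from g.map_lfp] at hmem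
  exact ⟨OrderHom.lfp g, hmem, g.lfp_le ht⟩

theorem exists_mem_nashEq_ge (hsup : ∀ s, sSup (bestResponse u s) ∈ bestResponse u s)
    {t : ∀ j, S j} (ht : t ≤ sSup (bestResponse u t)) : ∃ e ∈ nashEq u, t ≤ e := by
  let g : (∀ j, S j) →o (∀ j, S j) := ⟨_, monotone_sSup_bestResponse hsm hid hsup⟩
  have hmem := hsup (OrderHom.gfp g)
  rw [show sSup (bestResponse u (OrderHom.gfp g)) = OrderHom.gfp g from g.map_gfp] at hmem
  exact ⟨OrderHom.gfp g, hmem, g.le_gfp ht⟩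

end BestResponse

section AbstractGame

variable {n : ℕ} {S A : Fin n → Type*} {N : Fin n → ℕ} {u : ∀ i, (∀ j, S j) → (Fin (N i) → ℝ)}
  {γ : ∀ j, A j → S j}

def abstractUtility (u : ∀ i, (∀ j, S j) → (Fin (N i) → ℝ)) (γ : ∀ j, A j → S j) :
    ∀ i, (∀ j, A j) → (Fin (N i) → ℝ) :=
  fun i a => u i (Pi.map γ a)

theorem abstractUtility_update (a : ∀ j, A j) (i : Fin n) (x : A i) :
    abstractUtility u γ i (update a i x) = u i (update (Pi.map γ a) i (γ i x)) := by
  rw [abstractUtility, Pi.map_update]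

variable [∀ j, CompleteLattice (S j)] [∀ j, CompleteLattice (A j)]

theorem IsSupermodularUtility.abstractUtility (hsm : IsSupermodularUtility u)
    (hsup : ∀ j, ∀ x y : A j, γ j (x ⊔ y) = γ j x ⊔ γ j y)
    (hinf : ∀ j, ∀ x y : A j, γ j (x ⊓ y) = γ j x ⊓ γ j y) :
    IsSupermodularUtility (abstractUtility u γ) := by
  intro i a x y
  simp only [abstractUtility_update, hsup, hinf]
  exact hsm i _ _ _

theorem HasIncreasingDifferences.abstractUtility (hid : HasIncreasingDifferences u)
    (hγ : ∀ j, Monotone (γ j)) : HasIncreasingDifferences (abstractUtility u γ) := by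
  intro i x x' hx a b hab
  simp only [abstractUtility_update]
  exact hid i _ _ (hγ i hx) _ _ fun j => hγ j (hab j)

theorem inf_mem_bestResponse_of_map_eq_sup (hsm : IsSupermodularUtility u) {a b e : ∀ j, A j}
    {w : ∀ j, S j} (hw : w ∈ bestResponse u (Pi.map γ a))
    (he : e ∈ bestResponse (abstractUtility u γ) a) (hb : Pi.map γ b = w ⊔ Pi.map γ e) :
    w ⊓ Pi.map γ e ∈ bestResponse u (Pi.map γ a) := by
  refine mem_bestResponse_of_utility_le hw fun i => hsm.le_inf_of_sup_le ?_
  have hbi : γ i (b i) = w i ⊔ γ i (e i) := congrFun hb i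
  have hbe := he i (b i)
  rwa [abstractUtility_update, abstractUtility_update, hbi] at hbe

theorem mem_bestResponse_of_map_eq_sup (hsm : IsSupermodularUtility u) {a b e : ∀ j, A j}
    {w : ∀ j, S j} (hw : w ∈ bestResponse u (Pi.map γ a))
    (he : e ∈ bestResponse (abstractUtility u γ) a) (hb : Pi.map γ b = w ⊔ Pi.map γ e) :
    b ∈ bestResponse (abstractUtility u γ) a := by
  intro i x
  have hbi : γ i (b i) = w i ⊔ γ i (e i) := congrFun hb i
  have hxe := he i x
  rw [abstractUtility_update, abstractUtility_update] at hxe ⊢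
  rw [hbi]
  exact hxe.trans (hsm.le_sup_of_inf_le (hw i _))

variable (hsm : IsSupermodularUtility u) (hid : HasIncreasingDifferences u)
  (hsup : ∀ s, sSup (bestResponse u s) ∈ bestResponse u s)
  (hinfG : ∀ a, sInf (bestResponse (abstractUtility u γ) a) ∈ bestResponse (abstractUtility u γ) a)
  (hkey : ∀ a, sSup (bestResponse u (Pi.map γ a)) ⊔
    Pi.map γ (sInf (bestResponse (abstractUtility u γ) a)) ∈ range (Pi.map γ))
include hsm hid hsup hinfG hkey

theorem smythLE_nashEq_image (hinf : ∀ s, sInf (bestResponse u s) ∈ bestResponse u s)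
    (hγ : Monotone (Pi.map γ)) :
    SmythLE (nashEq u) (Pi.map γ '' nashEq (abstractUtility u γ)) := by
  rintro _ ⟨a, ha, rfl⟩
  obtain ⟨b, hb⟩ := hkey a
  apply exists_mem_nashEq_le hsm hid hinf
  calc sInf (bestResponse u (Pi.map γ a))
      ≤ sSup (bestResponse u (Pi.map γ a)) ⊓
          Pi.map γ (sInf (bestResponse (abstractUtility u γ) a)) :=
        sInf_le (inf_mem_bestResponse_of_map_eq_sup hsm (hsup _) (hinfG a) hb)
    _ ≤ Pi.map γ (sInf (bestResponse (abstractUtility u γ) a)) := inf_le_right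
    _ ≤ Pi.map γ a := hγ (sInf_le ha)

theorem hoareLE_nashEq_image {α : ∀ j, S j → A j} (hgc : GaloisConnection (Pi.map α) (Pi.map γ))
    (hsmG : IsSupermodularUtility (abstractUtility u γ))
    (hidG : HasIncreasingDifferences (abstractUtility u γ))
    (hsupG : ∀ a, sSup (bestResponse (abstractUtility u γ) a) ∈
      bestResponse (abstractUtility u γ) a) :
    HoareLE (nashEq u) (Pi.map γ '' nashEq (abstractUtility u γ)) := by
  intro s hs
  obtain ⟨b, hb⟩ := hkey (Pi.map α s)
  have hs_le : s ≤ Pi.map γ b := calc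
    s ≤ sSup (bestResponse u s) := le_sSup hs
    _ ≤ sSup (bestResponse u (Pi.map γ (Pi.map α s))) :=
      monotone_sSup_bestResponse hsm hid hsup (hgc.le_u_l s)
    _ ≤ Pi.map γ b := hb ▸ le_sup_left
  have hb_mem := mem_bestResponse_of_map_eq_sup hsm (hsup _) (hinfG _) hb
  obtain ⟨e, he, hle⟩ :=
    exists_mem_nashEq_ge hsmG hidG hsupG ((hgc.l_le hs_le).trans (le_sSup hb_mem))
  exact ⟨_, mem_image_of_mem _ he, (hgc.le_u_l s).trans (hgc.monotone_u hle)⟩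

end AbstractGame

theorem abstract_strategy_game_correctness_general {n : ℕ} {S A : Fin n → Type*}
    [∀ j, CompleteLattice (S j)] [∀ j, CompleteLattice (A j)]
    (α : ∀ j, S j → A j) (γ : ∀ j, A j → S j)
    (hgc : ∀ j, GaloisConnection (α j) (γ j))
    (hdisj : ∀ j, ∀ x y : A j, γ j (x ⊔ y) = γ j x ⊔ γ j y)
    {N : Fin n → ℕ} (u : ∀ i, (∀ j, S j) → (Fin (N i) → ℝ))
    -- Γ is supermodular: each uᵢ(·, s₋ᵢ) is supermodular …
    (hsm : ∀ i, ∀ s : ∀ j, S j, ∀ x y : S i,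
      u i (Function.update s i x) + u i (Function.update s i y) ≤
        u i (Function.update s i (x ⊔ y)) + u i (Function.update s i (x ⊓ y)))
    -- … and each uᵢ has increasing differences in (sᵢ, s₋ᵢ)
    (hid : ∀ i, ∀ x x' : S i, x ≤ x' → ∀ s t : ∀ j, S j, s ≤ t →
      u i (Function.update s i x') - u i (Function.update s i x) ≤
        u i (Function.update t i x') - u i (Function.update t i x))
    -- B(s) is a nonempty subcomplete sublattice of S
    (hB : ∀ s : ∀ j, S j, (bestResponse u s).Nonempty ∧
      ∀ Z ⊆ bestResponse u s, Z.Nonempty →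
        sInf Z ∈ bestResponse u s ∧ sSup Z ∈ bestResponse u s)
    -- B^G(a) is a nonempty subcomplete sublattice of A
    (hBG : ∀ a : ∀ j, A j,
      (bestResponse (fun i a => u i (fun j => γ j (a j))) a).Nonempty ∧
      ∀ Z ⊆ bestResponse (fun i a => u i (fun j => γ j (a j))) a, Z.Nonempty →
        sInf Z ∈ bestResponse (fun i a => u i (fun j => γ j (a j))) a ∧
        sSup Z ∈ bestResponse (fun i a => u i (fun j => γ j (a j))) a)
    -- key hypothesis: (⋁ B(γ a)) ⊔ γ(⋀ B^G(a)) ∈ γ(A)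
    (hkey : ∀ a : ∀ j, A j,
      (sSup (bestResponse u (fun j => γ j (a j))) ⊔
        fun j => γ j ((sInf (bestResponse (fun i a => u i (fun j => γ j (a j))) a)) j)) ∈
          Set.range (fun b : ∀ j, A j => fun j => γ j (b j))) :
    EgliMilnerLE (nashEq u)
      ((fun b : ∀ j, A j => fun j => γ j (b j)) ''
        nashEq (fun i a => u i (fun j => γ j (a j)))) ∧
    (∀ L L', IsLeast (nashEq u) L →
      IsLeast (nashEq (fun i a => u i (fun j => γ j (a j)))) L' →
      L ≤ fun j => γ j (L' j)) ∧
    (∀ G G', IsGreatest (nashEq u) G →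
      IsGreatest (nashEq (fun i a => u i (fun j => γ j (a j)))) G' →
      G ≤ fun j => γ j (G' j)) := by
  have hBbounds s := (hB s).2 _ subset_rfl (hB s).1
  have hBGbounds a := (hBG a).2 _ subset_rfl (hBG a).1
  have hgcπ : GaloisConnection (Pi.map α) (Pi.map γ) := GaloisConnection.dfun α γ hgc
  have hγ : Monotone (Pi.map γ) := hgcπ.monotone_u
  have smyth := smythLE_nashEq_image hsm hid (fun s => (hBbounds s).2)
    (fun a => (hBGbounds a).1) hkey (fun s => (hBbounds s).1) hγ
  have hoare := hoareLE_nashEq_image hsm hid (fun s => (hBbounds s).2)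
    (fun a => (hBGbounds a).1) hkey hgcπ
    (IsSupermodularUtility.abstractUtility hsm hdisj fun j _ _ => (hgc j).u_inf)
    (HasIncreasingDifferences.abstractUtility hid fun j => (hgc j).monotone_u)
    (fun a => (hBGbounds a).2)
  exact ⟨⟨smyth, hoare⟩,
    fun L L' hL hL' => smyth.le_of_mem_lowerBounds hL.2 (mem_image_of_mem _ hL'.1),
    fun G G' hG hG' => hoare.le_of_mem_upperBounds hG.1 (hγ.mem_upperBounds_image hG'.2)⟩

/-- correctness of games with abstract strategy spaces: given finitely
disjunctive Galois insertions `(αᵢ, Sᵢ, Aᵢ, γᵢ)` with componentwise product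
`(α, S, A, γ)`, a supermodular game `Γ = ⟨Sᵢ, uᵢ⟩` whose best response `B` has
nonempty subcomplete-sublattice values, the abstract game `Γ^G = ⟨Aᵢ, uᵢ∘γ⟩` whose
best response `B^G` also has nonempty subcomplete-sublattice values, and assuming
`(⋁ B(γ a)) ⊔ γ(⋀ B^G(a)) ∈ γ(A)` for all `a`, the equilibria satisfy
`Eq(Γ) ⪯_EM γ^s(Eq(Γ^G))`; in particular the least (resp. greatest) equilibrium of
`Γ` is below the concretization of the least (resp. greatest) equilibrium of `Γ^G`. -/
theorem abstract_strategy_game_correctness {n : ℕ} {S A : Fin n → Type*}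
    [∀ j, CompleteLattice (S j)] [∀ j, CompleteLattice (A j)]
    (α : ∀ j, S j → A j) (γ : ∀ j, A j → S j)
    (hgc : ∀ j, GaloisConnection (α j) (γ j))
    (hgi : ∀ j, ∀ a : A j, α j (γ j a) = a)
    (hdisj : ∀ j, ∀ x y : A j, γ j (x ⊔ y) = γ j x ⊔ γ j y)
    {N : Fin n → ℕ} (u : ∀ i, (∀ j, S j) → (Fin (N i) → ℝ))
    -- Γ is supermodular: each uᵢ(·, s₋ᵢ) is supermodular …
    (hsm : ∀ i, ∀ s : ∀ j, S j, ∀ x y : S i,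
      u i (Function.update s i x) + u i (Function.update s i y) ≤
        u i (Function.update s i (x ⊔ y)) + u i (Function.update s i (x ⊓ y)))
    -- … and each uᵢ has increasing differences in (sᵢ, s₋ᵢ)
    (hid : ∀ i, ∀ x x' : S i, x ≤ x' → ∀ s t : ∀ j, S j, s ≤ t →
      u i (Function.update s i x') - u i (Function.update s i x) ≤
        u i (Function.update t i x') - u i (Function.update t i x))
    -- B(s) is a nonempty subcomplete sublattice of S
    (hB : ∀ s : ∀ j, S j, (bestResponse u s).Nonempty ∧
      ∀ Z ⊆ bestResponse u s, Z.Nonempty →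
        sInf Z ∈ bestResponse u s ∧ sSup Z ∈ bestResponse u s)
    -- B^G(a) is a nonempty subcomplete sublattice of A
    (hBG : ∀ a : ∀ j, A j,
      (bestResponse (fun i a => u i (fun j => γ j (a j))) a).Nonempty ∧
      ∀ Z ⊆ bestResponse (fun i a => u i (fun j => γ j (a j))) a, Z.Nonempty →
        sInf Z ∈ bestResponse (fun i a => u i (fun j => γ j (a j))) a ∧
        sSup Z ∈ bestResponse (fun i a => u i (fun j => γ j (a j))) a)
    -- key hypothesis: (⋁ B(γ a)) ⊔ γ(⋀ B^G(a)) ∈ γ(A)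
    (hkey : ∀ a : ∀ j, A j,
      (sSup (bestResponse u (fun j => γ j (a j))) ⊔
        fun j => γ j ((sInf (bestResponse (fun i a => u i (fun j => γ j (a j))) a)) j)) ∈
          Set.range (fun b : ∀ j, A j => fun j => γ j (b j))) :
    EgliMilnerLE (nashEq u)
      ((fun b : ∀ j, A j => fun j => γ j (b j)) ''
        nashEq (fun i a => u i (fun j => γ j (a j)))) ∧
    (∀ L L', IsLeast (nashEq u) L →
      IsLeast (nashEq (fun i a => u i (fun j => γ j (a j)))) L' →
      L ≤ fun j => γ j (L' j)) ∧
    (∀ G G', IsGreatest (nashEq u) G →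
      IsGreatest (nashEq (fun i a => u i (fun j => γ j (a j)))) G' →
      G ≤ fun j => γ j (G' j)) :=
  abstract_strategy_game_correctness_general α γ hgc hdisj u hsm hid hB hBG hkey
end
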